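/- arXiv:2605.07671 — 2 statements merged into one kernel-verified Lean document; each statement's English description precedes it below -/
import Mathlib

section
/- Fix β, γ > 0 with √(γ/β) ≤ 1 - p_min for some p_min ∈ [0,1), and set r₀ = p_min + √(γ/β). For the step-function approval q(r) = indicator{r ≥ r₀}, the induced screening function p ↦ indicator{ max over r∈[0,1] of (-β(r-p)² + γ·q(r)) is attained at some r with r ≥ r₀ } equals indicator{p ≥ p_min} for all p ∈ [0,1] with p ≠ p_min. That is: every type p > p_min strictly prefers a report weakly above r₀ (inflating to r₀ if p < r₀, or truthful if p ≥ r₀), and every type p < p_min strictly prefers the truthful report r = p. -/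
/-- With `r₀ = p_min + √(γ/β)` and step approval at `r₀`, the induced
screening equals `1{p ≥ p_min}` away from `p_min`: every type `p > p_min` strictly
prefers some report `r ≥ r₀` over every report `r' < r₀`, and every type `p < p_min`
strictly prefers the truthful report `r = p` over every report `r ≥ r₀`. -/
theorem stmt_6 (β γ pmin : ℝ) (hβ : 0 < β) (hγ : 0 < γ)
    (hpmin : pmin ∈ Set.Ico (0:ℝ) 1) (hfit : Real.sqrt (γ / β) ≤ 1 - pmin)
    (r₀ : ℝ) (hr₀ : r₀ = pmin + Real.sqrt (γ / β))
    (V : ℝ → ℝ → ℝ)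
    (hV : V = fun p r => -β * (r - p) ^ 2 + γ * (if r₀ ≤ r then (1:ℝ) else 0)) :
    (∀ p ∈ Set.Icc (0:ℝ) 1, pmin < p →
      ∃ r ∈ Set.Icc (0:ℝ) 1, r₀ ≤ r ∧
        ∀ r' ∈ Set.Icc (0:ℝ) 1, r' < r₀ → V p r' < V p r) ∧
    (∀ p ∈ Set.Icc (0:ℝ) 1, p < pmin →
      ∀ r ∈ Set.Icc (0:ℝ) 1, r₀ ≤ r → V p r < V p p) := by
  set s := Real.sqrt (γ / β) with hs
  have hsd : 0 < γ / β := div_pos hγ hβ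
  have hs0 : 0 < s := Real.sqrt_pos.mpr hsd
  have hs2 : s ^ 2 = γ / β := Real.sq_sqrt hsd.le
  have hβs : β * s ^ 2 = γ := by
    rw [hs2]; field_simp
  subst hV
  constructor
  · intro p hp hpm
    refine ⟨max p r₀, ⟨le_trans hp.1 (le_max_left _ _), ?_⟩, le_max_right _ _, ?_⟩
    · apply max_le hp.2
      rw [hr₀]; linarith
    · intro r' hr' hr'lt
      have h1 : ¬ (r₀ ≤ r') := not_le.mpr hr'lt
      have h2 : r₀ ≤ max p r₀ := le_max_right _ _
      simp only [h1, h2, if_true, if_false, mul_zero, mul_one, add_zero]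
      have key : β * (max p r₀ - p) ^ 2 < γ := by
        rcases le_total r₀ p with h | h
        · rw [max_eq_left h]
          simp only [sub_self]
          nlinarith
        · rw [max_eq_right h]
          have h3 : 0 ≤ r₀ - p := by linarith
          have h4 : r₀ - p < s := by rw [hr₀]; linarith
          have h5 : (r₀ - p) ^ 2 < s ^ 2 := by nlinarith
          nlinarith [mul_lt_mul_of_pos_left h5 hβ]
      nlinarith [sq_nonneg (r' - p)]
  · intro p hp hpm r hr hr₀r
    have h1 : ¬ (r₀ ≤ p) := by rw [hr₀]; push_neg; linarith
    have h2 : r₀ ≤ r := hr₀r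
    simp only [h1, h2, if_true, if_false, mul_zero, mul_one, add_zero]
    have h3 : s < r - p := by rw [hr₀] at h2; linarith
    have h5 : s ^ 2 < (r - p) ^ 2 := by nlinarith
    nlinarith [mul_lt_mul_of_pos_left h5 hβ]
end

section
/- Let f : [0,1] → ℝ be continuous with f > 0, u_s > u_d > u_f, Π(p) = p(u_s-u_f) - (u_d-u_f), p_min = (u_d-u_f)/(u_s-u_f) ∈ (0,1). Then for every affine function q̃(p) = a + b·p mapping [0,1] into [0,1], the loss ∫₀^{p_min} q̃(p)·|Π(p)|·f(p) dp + ∫_{p_min}^1 (1 - q̃(p))·Π(p)·f(p) dp is strictly positive. Equivalently, no affine screening function achieves the first-best welfare ∫_{p_min}^1 Π(p) f(p) dp. -/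
open MeasureTheory

/-- No affine screening function `q̃(p) = a + b·p` mapping `[0,1]` into
`[0,1]` achieves first-best: the loss
`∫₀^{p_min} q̃·|Π|·f + ∫_{p_min}^1 (1-q̃)·Π·f` is strictly positive. -/
theorem stmt_10 (f : ℝ → ℝ) (hf : ContinuousOn f (Set.Icc 0 1))
    (hfpos : ∀ p ∈ Set.Icc (0:ℝ) 1, 0 < f p)
    (us uf ud : ℝ) (h1 : ud < us) (h2 : uf < ud)
    (netGain : ℝ → ℝ) (hNG : netGain = fun p => p * (us - uf) - (ud - uf))
    (pmin : ℝ) (hpmin : pmin = (ud - uf) / (us - uf))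
    (a b : ℝ) (hrange : ∀ p ∈ Set.Icc (0:ℝ) 1, a + b * p ∈ Set.Icc (0:ℝ) 1) :
    0 < (∫ p in (0:ℝ)..pmin, (a + b * p) * |netGain p| * f p) +
        ∫ p in pmin..1, (1 - (a + b * p)) * netGain p * f p := by
  have hus : 0 < us - uf := by linarith
  have hud : 0 < ud - uf := by linarith
  have hpmul : pmin * (us - uf) = ud - uf := by
    rw [hpmin, div_mul_cancel₀ _ (ne_of_gt hus)]
  have hp0 : 0 < pmin := by rw [hpmin]; positivity
  have hp1 : pmin < 1 := by
    rw [hpmin, div_lt_one hus]; linarith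
  have hNGneg : ∀ p ∈ Set.Ioo (0:ℝ) pmin, netGain p < 0 := by
    intro p hp
    rw [hNG]; simp only
    have : p * (us - uf) < pmin * (us - uf) := by
      exact mul_lt_mul_of_pos_right hp.2 hus
    linarith [hpmul]
  have hNGpos : ∀ p ∈ Set.Ioo pmin (1:ℝ), 0 < netGain p := by
    intro p hp
    rw [hNG]; simp only
    have : pmin * (us - uf) < p * (us - uf) := by
      exact mul_lt_mul_of_pos_right hp.1 hus
    linarith [hpmul]
  have hNGnn : ∀ p ∈ Set.Icc pmin (1:ℝ), 0 ≤ netGain p := by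
    intro p hp
    rw [hNG]; simp only
    have : pmin * (us - uf) ≤ p * (us - uf) := by
      exact mul_le_mul_of_nonneg_right hp.1 hus.le
    linarith [hpmul]
  -- continuity of the two integrands
  have hsub1 : Set.Icc (0:ℝ) pmin ⊆ Set.Icc 0 1 := Set.Icc_subset_Icc le_rfl hp1.le
  have hsub2 : Set.Icc pmin (1:ℝ) ⊆ Set.Icc 0 1 := Set.Icc_subset_Icc hp0.le le_rfl
  have hcontNG : Continuous netGain := by rw [hNG]; fun_prop
  have hcont1 : ContinuousOn (fun p => (a + b * p) * |netGain p| * f p)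
      (Set.Icc (0:ℝ) pmin) := by
    apply ContinuousOn.mul
    · exact ContinuousOn.mul (by fun_prop) (hcontNG.abs.continuousOn)
    · exact hf.mono hsub1
  have hcont2 : ContinuousOn (fun p => (1 - (a + b * p)) * netGain p * f p)
      (Set.Icc pmin (1:ℝ)) := by
    apply ContinuousOn.mul
    · exact ContinuousOn.mul (by fun_prop) hcontNG.continuousOn
    · exact hf.mono hsub2
  have hint1 : IntervalIntegrable (fun p => (a + b * p) * |netGain p| * f p)
      volume 0 pmin := hcont1.intervalIntegrable_of_Icc hp0.le
  have hint2 : IntervalIntegrable (fun p => (1 - (a + b * p)) * netGain p * f p)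
      volume pmin 1 := hcont2.intervalIntegrable_of_Icc hp1.le
  -- nonnegativity of integrands
  have hnn1 : ∀ p ∈ Set.Icc (0:ℝ) pmin, 0 ≤ (a + b * p) * |netGain p| * f p := by
    intro p hp
    have hp01 : p ∈ Set.Icc (0:ℝ) 1 := hsub1 hp
    have := (hrange p hp01).1
    exact mul_nonneg (mul_nonneg this (abs_nonneg _)) (hfpos p hp01).le
  have hnn2 : ∀ p ∈ Set.Icc pmin (1:ℝ), 0 ≤ (1 - (a + b * p)) * netGain p * f p := by
    intro p hp
    have hp01 : p ∈ Set.Icc (0:ℝ) 1 := hsub2 hp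
    have := (hrange p hp01).2
    exact mul_nonneg (mul_nonneg (by linarith) (hNGnn p hp)) (hfpos p hp01).le
  have hI1nn : 0 ≤ ∫ p in (0:ℝ)..pmin, (a + b * p) * |netGain p| * f p :=
    intervalIntegral.integral_nonneg hp0.le hnn1
  have hI2nn : 0 ≤ ∫ p in pmin..1, (1 - (a + b * p)) * netGain p * f p :=
    intervalIntegral.integral_nonneg hp1.le hnn2
  by_cases hab : a = 0 ∧ b = 0
  · -- q̃ ≡ 0 : second integral is strictly positive
    have hpos2 : 0 < ∫ p in pmin..1, (1 - (a + b * p)) * netGain p * f p := by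
      apply intervalIntegral.intervalIntegral_pos_of_pos_on hint2 _ hp1
      intro p hp
      have hp01 : p ∈ Set.Icc (0:ℝ) 1 := hsub2 ⟨hp.1.le, hp.2.le⟩
      rw [hab.1, hab.2]
      simp only [mul_zero, zero_mul, add_zero, sub_zero, one_mul]
      exact mul_pos (hNGpos p hp) (hfpos p hp01)
    linarith
  · -- q̃ > 0 on (0, pmin): first integral strictly positive
    have ha0 : 0 ≤ a := by
      have := (hrange 0 ⟨le_rfl, zero_le_one⟩).1
      simpa using this
    have hab1 : 0 ≤ a + b := by
      have := (hrange 1 ⟨zero_le_one, le_rfl⟩).1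
      simpa using this
    have hq : ∀ p ∈ Set.Ioo (0:ℝ) pmin, 0 < a + b * p := by
      intro p hp
      have hp1' : p < 1 := lt_trans hp.2 hp1
      rcases eq_or_lt_of_le ha0 with ha | ha
      · have hbne : b ≠ 0 := by
          intro hb0; exact hab ⟨ha.symm, hb0⟩
        have hbpos : 0 < b := by
          rcases lt_or_gt_of_ne hbne with h | h
          · exfalso; rw [← ha] at hab1; linarith
          · exact h
        rw [← ha]
        have := mul_pos hbpos hp.1
        linarith
      · nlinarith [hp.1, hp1']
    have hpos1 : 0 < ∫ p in (0:ℝ)..pmin, (a + b * p) * |netGain p| * f p := by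
      apply intervalIntegral.intervalIntegral_pos_of_pos_on hint1 _ hp0
      intro p hp
      have hp01 : p ∈ Set.Icc (0:ℝ) 1 := hsub1 ⟨hp.1.le, hp.2.le⟩
      have habs : 0 < |netGain p| := abs_pos.mpr (ne_of_lt (hNGneg p hp))
      exact mul_pos (mul_pos (hq p hp) habs) (hfpos p hp01)
    linarith
end
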